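/- Let I = (𝔼, D, c, f) be a CMP instance whose objective f is of type bottleneck, and let E = {e_1,…,e_k} ⊆ 𝔼. Then l'(I,E) = Σ_{l=1}^k l'(I,e_l). -/

import Mathlib

open scoped ENNReal BigOperators

/-- Objective type of a combinatorial minimization problem:
sum, product, or bottleneck. -/
inductive ObjType where
  | sum : ObjType
  | prod : ObjType
  | bottleneck : ObjType
deriving DecidableEq

/-- The cost `f_c(S)` of a feasible solution `S` under cost function `c`:
the sum, the product, or the maximum (for nonempty `S`) of the element costs. -/
noncomputable def objCost {ι : Type*} (t : ObjType) (c : ι → ℝ) (S : Finset ι) : ℝ :=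
  match t with
  | ObjType.sum => ∑ e ∈ S, c e
  | ObjType.prod => ∏ e ∈ S, c e
  | ObjType.bottleneck => if h : S.Nonempty then S.sup' h c else 0

/-- The optimal objective value `f(I)` of the instance with feasible set `D`. -/
noncomputable def optVal {ι : Type*} (t : ObjType) (c : ι → ℝ) (D : Finset (Finset ι)) : ℝ :=
  if h : D.Nonempty then D.inf' h (objCost t c) else 0

/-- `S` is an optimal solution of the instance `(𝔼, D, c, f)`. -/
def isOpt {ι : Type*} (t : ObjType) (c : ι → ℝ) (D : Finset (Finset ι)) (S : Finset ι) : Prop :=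
  S ∈ D ∧ objCost t c S = optVal t c D

/-- `0 ≤ a < maxdec(e)`, where `maxdec(e) = ∞` for sum/bottleneck objectives and
`maxdec(e) = c(e)` for the product objective. -/
def decOK {ι : Type*} (t : ObjType) (c : ι → ℝ) (e : ι) (a : ℝ) : Prop :=
  0 ≤ a ∧ (t = ObjType.prod → a < c e)

/-- Extended single upper tolerance
`u'(I,e) = sup {α ≥ 0 : every optimal solution of I is optimal for I_{α,e}}` valued in `[0,∞]`. -/
noncomputable def uTol {ι : Type*} [DecidableEq ι] (t : ObjType) (c : ι → ℝ)
    (D : Finset (Finset ι)) (e : ι) : ℝ≥0∞ :=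
  sSup (ENNReal.ofReal '' {a : ℝ | 0 ≤ a ∧
    ∀ S : Finset ι, isOpt t c D S →
      isOpt t (fun x => if x = e then c x + a else c x) D S})

/-- Extended regular set upper tolerance `u'(I,E)`, valued in `[0,∞]`. -/
noncomputable def uTolSet {ι : Type*} [DecidableEq ι] (t : ObjType) (c : ι → ℝ)
    (D : Finset (Finset ι)) (E : Finset ι) : ℝ≥0∞ :=
  sSup (ENNReal.ofReal '' {a : ℝ |
    ∀ S : Finset ι, isOpt t c D S →
      ∃ α : ι → ℝ, (∀ x, 0 ≤ α x) ∧ (∀ x ∉ E, α x = 0) ∧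
        a = ∑ x ∈ E, α x ∧ isOpt t (fun x => c x + α x) D S})

/-- Extended reverse set upper tolerance `u_b'(I,E)`, valued in `[0,∞]` (`inf ∅ = ∞`). -/
noncomputable def uTolSetRev {ι : Type*} [DecidableEq ι] (t : ObjType) (c : ι → ℝ)
    (D : Finset (Finset ι)) (E : Finset ι) : ℝ≥0∞ :=
  sInf (ENNReal.ofReal '' {a : ℝ |
    ∃ S : Finset ι, isOpt t c D S ∧
      ∃ α : ι → ℝ, (∀ x, 0 ≤ α x) ∧ (∀ x ∉ E, α x = 0) ∧
        a = ∑ x ∈ E, α x ∧ ¬ isOpt t (fun x => c x + α x) D S})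

/-- New single lower tolerance
`l'(I,e) = sup {α : 0 ≤ α < maxdec(e), f(I_{−α,e}) = f(I)}`, valued in `[0,∞]`. -/
noncomputable def lTol {ι : Type*} [DecidableEq ι] (t : ObjType) (c : ι → ℝ)
    (D : Finset (Finset ι)) (e : ι) : ℝ≥0∞ :=
  sSup (ENNReal.ofReal '' {a : ℝ | decOK t c e a ∧
    optVal t (fun x => if x = e then c x - a else c x) D = optVal t c D})

/-- New regular set lower tolerance `l'(I,E)`, valued in `[0,∞]`. -/
noncomputable def lTolSet {ι : Type*} [DecidableEq ι] (t : ObjType) (c : ι → ℝ)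
    (D : Finset (Finset ι)) (E : Finset ι) : ℝ≥0∞ :=
  sSup (ENNReal.ofReal '' {a : ℝ |
    ∃ α : ι → ℝ, (∀ x ∈ E, decOK t c x (α x)) ∧ (∀ x ∉ E, α x = 0) ∧
      a = ∑ x ∈ E, α x ∧ optVal t (fun x => c x - α x) D = optVal t c D})

/-- New reverse set lower tolerance `l_b'(I,E)`, valued in `[0,∞]` (`inf ∅ = ∞`). -/
noncomputable def lTolSetRev {ι : Type*} [DecidableEq ι] (t : ObjType) (c : ι → ℝ)
    (D : Finset (Finset ι)) (E : Finset ι) : ℝ≥0∞ :=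
  sInf (ENNReal.ofReal '' {a : ℝ |
    ∃ α : ι → ℝ, (∀ x ∈ E, decOK t c x (α x)) ∧ (∀ x ∉ E, α x = 0) ∧
      a = ∑ x ∈ E, α x ∧ optVal t (fun x => c x - α x) D < optVal t c D})

/-!
For a bottleneck objective and nonnegative decreases `α`, the optimum `f(I)` is preserved exactly
when every feasible solution keeps an element of cost at least `f(I)`. Call `e` a unique
bottleneck if some feasible solution has `e` as its only element of cost `≥ f(I)`. Such an `e`
can be decreased by at most `c(e) - f(I)`, and decreasing every element of `E` by that much at
once is admissible; an element that is not a unique bottleneck can be decreased arbitrarily.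
Hence both sides equal `Σ_{e ∈ E} (c(e) - f(I))` when all elements of `E` are unique
bottlenecks, and `∞` otherwise.
-/

theorem lTol_eq_lTolSet_singleton {ι : Type*} [DecidableEq ι] (t : ObjType) (c : ι → ℝ)
    (D : Finset (Finset ι)) (e : ι) :
    lTol t c D e = lTolSet t c D {e} := by
  rw [lTol, lTolSet]
  congr 2
  ext a
  simp only [Set.mem_ofPred_eq, Finset.mem_singleton, Finset.sum_singleton, forall_eq]
  constructor
  · rintro ⟨ha, hopt⟩
    refine ⟨fun x => if x = e then a else 0, by simpa using ha, fun x hx => if_neg hx,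
      by simp, ?_⟩
    convert hopt using 3 with x
    by_cases hx : x = e <;> simp [hx]
  · rintro ⟨α, hα, hzero, rfl, hopt⟩
    refine ⟨hα, ?_⟩
    convert hopt using 3 with x
    split_ifs with hx
    · rw [hx]
    · rw [hzero x hx, sub_zero]

namespace Bottleneck

variable {ι : Type*} {c c' : ι → ℝ} {D : Finset (Finset ι)}

local notation "f" => optVal ObjType.bottleneck

theorem le_optVal_iff (hD : D.Nonempty) (hSne : ∀ S ∈ D, S.Nonempty) {v : ℝ} :
    v ≤ f c D ↔ ∀ S ∈ D, ∃ x ∈ S, v ≤ c x := by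
  simp only [optVal, hD, dite_true, Finset.le_inf'_iff]
  refine forall₂_congr fun S hS => ?_
  simp only [objCost, hSne S hS, dite_true, Finset.le_sup'_iff]

theorem optVal_mono (hD : D.Nonempty) (hSne : ∀ S ∈ D, S.Nonempty) (hc : c' ≤ c) :
    f c' D ≤ f c D :=
  (le_optVal_iff hD hSne).2 fun S hS =>
    let ⟨x, hx, hle⟩ := (le_optVal_iff hD hSne).1 le_rfl S hS
    ⟨x, hx, hle.trans (hc x)⟩

theorem optVal_eq_iff_of_le (hD : D.Nonempty) (hSne : ∀ S ∈ D, S.Nonempty) (hc : c' ≤ c) :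
    f c' D = f c D ↔ ∀ S ∈ D, ∃ x ∈ S, f c D ≤ c' x := by
  rw [← le_optVal_iff hD hSne]
  exact ⟨fun h => h.ge, fun h => (optVal_mono hD hSne hc).antisymm h⟩

theorem optVal_sub_eq_iff (hD : D.Nonempty) (hSne : ∀ S ∈ D, S.Nonempty) {α : ι → ℝ}
    (hα : ∀ x, 0 ≤ α x) :
    f (fun x => c x - α x) D = f c D ↔ ∀ S ∈ D, ∃ x ∈ S, f c D ≤ c x - α x :=
  optVal_eq_iff_of_le hD hSne fun x => sub_le_self _ (hα x)

def IsUniqueBottleneck (c : ι → ℝ) (D : Finset (Finset ι)) (e : ι) : Prop :=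
  ∃ S ∈ D, e ∈ S ∧ ∀ x ∈ S, x ≠ e → c x < f c D

theorem IsUniqueBottleneck.optVal_le (hD : D.Nonempty) (hSne : ∀ S ∈ D, S.Nonempty) {e : ι}
    (he : IsUniqueBottleneck c D e) : f c D ≤ c e := by
  obtain ⟨S, hS, -, hlt⟩ := he
  obtain ⟨x, hx, hle⟩ := (le_optVal_iff hD hSne).1 le_rfl S hS
  by_contra hne
  exact (hle.trans_lt (hlt x hx fun h => hne (h ▸ hle))).false

theorem IsUniqueBottleneck.le_sub_optVal (hD : D.Nonempty) (hSne : ∀ S ∈ D, S.Nonempty)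
    {e : ι} (he : IsUniqueBottleneck c D e) {α : ι → ℝ} (hα : ∀ x, 0 ≤ α x)
    (hopt : f (fun x => c x - α x) D = f c D) : α e ≤ c e - f c D := by
  obtain ⟨S, hS, -, hlt⟩ := he
  obtain ⟨x, hx, hle⟩ := (optVal_sub_eq_iff hD hSne hα).1 hopt S hS
  by_cases hxe : x = e
  · subst hxe
    linarith
  · linarith [hlt x hx hxe, hα x]

theorem exists_ne_of_not_isUniqueBottleneck (hD : D.Nonempty) (hSne : ∀ S ∈ D, S.Nonempty)
    {e : ι} (he : ¬IsUniqueBottleneck c D e) {S : Finset ι} (hS : S ∈ D) :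
    ∃ x ∈ S, x ≠ e ∧ f c D ≤ c x := by
  by_cases heS : e ∈ S
  · simp only [IsUniqueBottleneck, not_exists, not_and, not_forall, not_lt] at he
    obtain ⟨x, hx, hxe, hle⟩ := he S hS heS
    exact ⟨x, hx, hxe, hle⟩
  · obtain ⟨x, hx, hle⟩ := (le_optVal_iff hD hSne).1 le_rfl S hS
    exact ⟨x, hx, fun h => heS (h ▸ hx), hle⟩

theorem decOK_iff {e : ι} {a : ℝ} : decOK ObjType.bottleneck c e a ↔ 0 ≤ a :=
  ⟨And.left, fun h => ⟨h, nofun⟩⟩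

variable [DecidableEq ι]

theorem lTolSet_of_forall_isUniqueBottleneck (hD : D.Nonempty) (hSne : ∀ S ∈ D, S.Nonempty)
    {E : Finset ι} (hE : ∀ e ∈ E, IsUniqueBottleneck c D e) :
    lTolSet ObjType.bottleneck c D E = ENNReal.ofReal (∑ e ∈ E, (c e - f c D)) := by
  refine (ENNReal.ofReal_mono.map_isGreatest ⟨?_, ?_⟩).csSup_eq
  · -- lower every element of `E` exactly down to `f(I)`
    have hα : ∀ x, 0 ≤ if x ∈ E then c x - f c D else 0 := fun x => by
      split_ifs with hx
      · exact sub_nonneg.2 ((hE x hx).optVal_le hD hSne)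
      · exact le_rfl
    refine ⟨_, fun x _ => decOK_iff.2 (hα x), fun x hx => if_neg hx,
      (Finset.sum_congr rfl fun x hx => if_pos hx).symm, (optVal_sub_eq_iff hD hSne hα).2 ?_⟩
    intro S hS
    obtain ⟨x, hx, hle⟩ := (le_optVal_iff hD hSne).1 le_rfl S hS
    refine ⟨x, hx, ?_⟩
    split_ifs <;> linarith
  · rintro _ ⟨α, hdec, hzero, rfl, hopt⟩
    have hα : ∀ x, 0 ≤ α x := fun x => by
      by_cases hx : x ∈ E
      · exact decOK_iff.1 (hdec x hx)
      · exact (hzero x hx).ge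
    exact Finset.sum_le_sum fun e he => (hE e he).le_sub_optVal hD hSne hα hopt

theorem lTolSet_of_not_isUniqueBottleneck (hD : D.Nonempty) (hSne : ∀ S ∈ D, S.Nonempty)
    {E : Finset ι} {e : ι} (heE : e ∈ E) (he : ¬IsUniqueBottleneck c D e) :
    lTolSet ObjType.bottleneck c D E = ⊤ := by
  rw [lTolSet]
  refine sSup_eq_top.2 fun b hb => ⟨_, ⟨b.toReal + 1, ?_, rfl⟩, ?_⟩
  · have hα : ∀ x, 0 ≤ if x = e then b.toReal + 1 else 0 := fun x => by
      split_ifs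
      · positivity
      · exact le_rfl
    refine ⟨_, fun x _ => decOK_iff.2 (hα x),
      fun x hx => if_neg (ne_of_mem_of_not_mem heE hx).symm, by simp [heE],
      (optVal_sub_eq_iff hD hSne hα).2 fun S hS => ?_⟩
    obtain ⟨x, hx, hxe, hle⟩ := exists_ne_of_not_isUniqueBottleneck hD hSne he hS
    exact ⟨x, hx, by simpa [hxe] using hle⟩
  · rw [ENNReal.lt_ofReal_iff_toReal_lt hb.ne]
    exact lt_add_one _

end Bottleneck

open Bottleneck in
theorem lrg_eq_sum_bottleneck_general {ι : Type*} [DecidableEq ι]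
    (c : ι → ℝ) (D : Finset (Finset ι))
    (hD : D.Nonempty) (hSne : ∀ S ∈ D, S.Nonempty)
    (E : Finset ι) :
    lTolSet ObjType.bottleneck c D E = ∑ e ∈ E, lTol ObjType.bottleneck c D e := by
  simp only [lTol_eq_lTolSet_singleton]
  by_cases hE : ∀ e ∈ E, IsUniqueBottleneck c D e
  · have hsingle : ∀ e ∈ E, lTolSet ObjType.bottleneck c D {e}
        = ENNReal.ofReal (c e - optVal ObjType.bottleneck c D) := fun e he => by
      rw [lTolSet_of_forall_isUniqueBottleneck hD hSne (by simpa using hE e he),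
        Finset.sum_singleton]
    rw [lTolSet_of_forall_isUniqueBottleneck hD hSne hE, Finset.sum_congr rfl hsingle,
      ENNReal.ofReal_sum_of_nonneg fun e he => sub_nonneg.2 ((hE e he).optVal_le hD hSne)]
  · push Not at hE
    obtain ⟨e, heE, he⟩ := hE
    rw [lTolSet_of_not_isUniqueBottleneck hD hSne heE he, eq_comm, ENNReal.sum_eq_top]
    exact ⟨e, heE, lTolSet_of_not_isUniqueBottleneck hD hSne (Finset.mem_singleton_self e) he⟩

/-- Theorem 6(b): for a bottleneck objective, `l'(I,E) = Σ_{l} l'(I,e_l)`. -/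
theorem lrg_eq_sum_bottleneck {ι : Type*} [Fintype ι] [DecidableEq ι]
    (c : ι → ℝ) (D : Finset (Finset ι))
    (hD : D.Nonempty) (hSne : ∀ S ∈ D, S.Nonempty)
    (E : Finset ι) (hE : E.Nonempty) :
    lTolSet ObjType.bottleneck c D E = ∑ e ∈ E, lTol ObjType.bottleneck c D e :=
  lrg_eq_sum_bottleneck_general c D hD hSne E
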